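/- arXiv:2111.09229 — 5 statements merged into one kernel-verified Lean document; each statement's English description precedes it below -/
import Mathlib

section
/- For every real β > 0 and every complex number z, the Mittag-Leffler function E_β is complex differentiable at z with derivative (1/β)·E_{β,β}(z), i.e. (d/dz) E_β(z) = (1/β) E_{β,β}(z) on all of ℂ. -/
/-- The generalized Mittag-Leffler function `E_{β,ρ}(z) = ∑_{n=0}^∞ z^n / Γ(βn + ρ)`. -/
noncomputable def mittagLeffler (β ρ : ℝ) (z : ℂ) : ℂ :=
  ∑' n : ℕ, z ^ n / (Real.Gamma (β * n + ρ) : ℂ)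

/-!
Comparing `Γ` with factorials shows that it outgrows every exponential: `K ^ (s - 2) ≤ e ^ K Γ(s)`
for `K ≥ 1`, `s ≥ 2`. Hence on every ball the terms `z ^ n / Γ(βn + ρ)` are dominated by a
convergent geometric series, so `E_{β,ρ}` is a locally uniform limit of polynomials and can be
differentiated termwise. The functional equation `Γ(s + 1) = s Γ(s)` turns the differentiated
series of `E_β` into `β⁻¹ E_{β,β}`.
-/

open Real Filter Metric

theorem Real.rpow_sub_two_le_exp_mul_Gamma {K s : ℝ} (hK : 1 ≤ K) (hs : 2 ≤ s) :
    K ^ (s - 2) ≤ exp K * Gamma s := by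
  have h2m : 2 ≤ ⌊s⌋₊ := Nat.le_floor (by exact_mod_cast hs)
  obtain ⟨k, hk⟩ : ∃ k : ℕ, ⌊s⌋₊ = k + 1 := Nat.exists_eq_add_one.mpr (by omega)
  have hks : (k : ℝ) + 1 ≤ s := by exact_mod_cast hk ▸ Nat.floor_le (by linarith)
  have hsk : s < k + 2 := by
    have := Nat.lt_floor_add_one s
    rw [hk] at this; push_cast at this; linarith
  have hk2 : (2 : ℝ) ≤ k + 1 := by exact_mod_cast hk ▸ h2m
  calc K ^ (s - 2) ≤ K ^ (k : ℝ) := rpow_le_rpow_of_exponent_le hK (by linarith)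
    _ = K ^ k / k.factorial * k.factorial := by
      rw [rpow_natCast, div_mul_cancel₀ _ (by positivity)]
    _ ≤ exp K * Gamma (k + 1) := by
      rw [Gamma_nat_eq_factorial]
      gcongr
      exact pow_div_factorial_le_exp _ (by linarith) k
    _ ≤ exp K * Gamma s := by
      gcongr
      exact Gamma_strictMonoOn_Ici.monotoneOn hk2 hs hks

theorem summable_norm_pow_div_Gamma {β : ℝ} (hβ : 0 < β) (ρ : ℝ) (z : ℂ) :
    Summable fun n : ℕ => ‖z ^ n / (Gamma (β * n + ρ) : ℂ)‖ := by
  set D := ‖z‖ + 1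
  have hD : 0 < D := by positivity
  set K := D ^ β⁻¹
  have hK : 1 ≤ K := one_le_rpow (by simp [D]) (by positivity)
  have hKβ : K ^ β = D := rpow_inv_rpow hD.le hβ.ne'
  have hgeom : Summable fun n : ℕ => exp K * K ^ (2 - ρ) * (‖z‖ / D) ^ n :=
    (summable_geometric_of_lt_one (by positivity) ((div_lt_one hD).mpr (by simp [D]))).mul_left _
  refine Summable.of_norm_bounded_eventually hgeom ?_
  have harg : Tendsto (fun n : ℕ => β * n + ρ) atTop atTop :=
    tendsto_atTop_add_const_right _ _ (tendsto_natCast_atTop_atTop.const_mul_atTop hβ)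
  rw [Nat.cofinite_eq_atTop]
  filter_upwards [harg.eventually_ge_atTop 2] with n hn
  have hΓ : 0 < Gamma (β * n + ρ) := Gamma_pos_of_pos (by linarith)
  have hDn : D ^ n ≤ exp K * Gamma (β * n + ρ) * K ^ (2 - ρ) := by
    have h := rpow_sub_two_le_exp_mul_Gamma hK hn
    rw [add_sub_assoc, rpow_add (by positivity), rpow_mul_natCast (by positivity), hKβ] at h
    calc D ^ n = D ^ n * K ^ (ρ - 2) * K ^ (2 - ρ) := by
          rw [mul_assoc, ← rpow_add (by positivity)]; simp
      _ ≤ exp K * Gamma (β * n + ρ) * K ^ (2 - ρ) := by gcongr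
  rw [norm_norm, norm_div, norm_pow, Complex.norm_real, norm_of_nonneg hΓ.le, div_pow,
    div_le_iff₀ hΓ]
  calc ‖z‖ ^ n = ‖z‖ ^ n / D ^ n * D ^ n := by rw [div_mul_cancel₀ _ (by positivity)]
    _ ≤ ‖z‖ ^ n / D ^ n * (exp K * Gamma (β * n + ρ) * K ^ (2 - ρ)) := by gcongr
    _ = exp K * K ^ (2 - ρ) * (‖z‖ ^ n / D ^ n) * Gamma (β * n + ρ) := by ring

theorem norm_pow_div_le_of_mem_ball {R : ℝ} {w : ℂ} (hw : w ∈ ball (0 : ℂ) R) (n : ℕ) (c : ℂ) :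
    ‖w ^ n / c‖ ≤ ‖(R : ℂ) ^ n / c‖ := by
  rw [mem_ball_zero_iff] at hw
  rw [norm_div, norm_div, norm_pow, norm_pow, Complex.norm_real,
    norm_of_nonneg ((norm_nonneg w).trans hw.le)]
  gcongr

theorem differentiable_mittagLeffler {β : ℝ} (hβ : 0 < β) (ρ : ℝ) :
    Differentiable ℂ (mittagLeffler β ρ) := fun z ↦
  (Complex.differentiableOn_tsum_of_summable_norm
    (summable_norm_pow_div_Gamma hβ ρ ((‖z‖ + 1 : ℝ) : ℂ))
    (fun n ↦ ((differentiable_pow n).div_const _).differentiableOn) isOpen_ball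
    (fun n _ hw ↦ norm_pow_div_le_of_mem_ball hw n _)).differentiableAt
    (isOpen_ball.mem_nhds (by simp))

theorem hasSum_deriv_mittagLeffler {β : ℝ} (hβ : 0 < β) (ρ : ℝ) (z : ℂ) :
    HasSum (fun n : ℕ ↦ deriv (fun w : ℂ ↦ w ^ n / (Gamma (β * n + ρ) : ℂ)) z)
      (deriv (mittagLeffler β ρ) z) :=
  Complex.hasSum_deriv_of_summable_norm (summable_norm_pow_div_Gamma hβ ρ ((‖z‖ + 1 : ℝ) : ℂ))
    (fun n ↦ ((differentiable_pow n).div_const _).differentiableOn) isOpen_ball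
    (fun n _ hw ↦ norm_pow_div_le_of_mem_ball hw n _) (by simp)

theorem deriv_pow_succ_div_Gamma {β : ℝ} (hβ : β ≠ 0) (n : ℕ) (z : ℂ) :
    deriv (fun w : ℂ ↦ w ^ (n + 1) / (Gamma (β * (n + 1 : ℕ) + 1) : ℂ)) z =
      1 / β * (z ^ n / (Gamma (β * n + β) : ℂ)) := by
  have hs : β * (n + 1 : ℕ) ≠ 0 := mul_ne_zero hβ (by positivity)
  rw [deriv_div_const, deriv_pow_field, Gamma_add_one hs]
  push_cast
  field_simp

/-- For every `β > 0` and every `z : ℂ`, the Mittag-Leffler function `E_β = E_{β,1}` is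
complex differentiable at `z` with derivative `(1/β) · E_{β,β}(z)`. -/
theorem hasDerivAt_mittagLeffler (β : ℝ) (hβ : 0 < β) (z : ℂ) :
    HasDerivAt (mittagLeffler β 1) ((1 / (β : ℂ)) * mittagLeffler β β z) z := by
  have hshift := (hasSum_nat_add_iff' 1).mpr (hasSum_deriv_mittagLeffler hβ 1 z)
  simp only [deriv_pow_succ_div_Gamma hβ.ne', Finset.range_one, Finset.sum_singleton,
    pow_zero, deriv_const, sub_zero] at hshift
  have hE : HasSum (fun n : ℕ ↦ 1 / (β : ℂ) * (z ^ n / (Gamma (β * n + β) : ℂ)))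
      (1 / β * mittagLeffler β β z) :=
    ((summable_norm_pow_div_Gamma hβ β z).of_norm.hasSum).mul_left _
  rw [← hshift.unique hE]
  exact (differentiable_mittagLeffler hβ 1 z).hasDerivAt
end

section
/- Let 0 < β ≤ 1. If the Mittag-Leffler function satisfies the multiplicative functional equation E_β(−(x+y)) = E_β(−x)·E_β(−y) for all real x, y ≥ 0, then β = 1 (equivalently, E_β is the exponential function). -/
/-!
By the ratio test (log-convexity of `Γ` makes `Γ(y) / Γ(y + β)` tend to `0`) the power series of
`E_β` has infinite radius, so `E_β` is real analytic, and the identity theorem, applied in each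
variable in turn, extends the functional equation from `x, y ≥ 0` to all of `ℝ`. Hence
`E_β(n) = E_β(1)^n` grows at most exponentially. On the other hand, log-convexity gives
`Γ(βn + 1) ≤ (n!)^β`, so for `β < 1` the single term `n^n / Γ(βn + 1)` of `E_β(n)` is at least
`(n!)^(1-β)`, which outgrows every exponential.
-/

open Real Filter Topology Set
open scoped Nat

/-- The (real-valued) Mittag-Leffler function `E_β(x) = ∑_{n=0}^∞ x^n / Γ(βn + 1)`
for real arguments. -/
noncomputable def mittagLefflerReal (β x : ℝ) : ℝ :=
  ∑' n : ℕ, x ^ n / Real.Gamma (β * n + 1)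

theorem Real.rpow_sub_one_mul_Gamma_le_Gamma_add {x a : ℝ} (hx : 1 < x) (ha : 0 < a) :
    (x - 1) ^ a * Gamma x ≤ Gamma (x + a) := by
  have hΓx : 0 < Gamma x := Gamma_pos_of_pos (by linarith)
  have hΓx1 : 0 < Gamma (x - 1) := Gamma_pos_of_pos (by linarith)
  have hrec : Gamma x = (x - 1) * Gamma (x - 1) := by
    simpa using Gamma_add_one (s := x - 1) (by linarith)
  have hslope := convexOn_log_Gamma.slope_mono_adjacent (x := x - 1) (y := x) (z := x + a)
    (mem_Ioi.mpr (by linarith)) (mem_Ioi.mpr (by linarith)) (by linarith) (by linarith)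
  have hlog : log (Gamma x) - log (Gamma (x - 1)) = log (x - 1) := by
    rw [hrec, log_mul (by linarith) hΓx1.ne']; ring
  simp only [Function.comp, hlog, sub_sub_cancel, div_one, add_sub_cancel_left,
    le_div_iff₀ ha] at hslope
  have : log ((x - 1) ^ a * Gamma x) ≤ log (Gamma (x + a)) := by
    rw [log_mul (by positivity) hΓx.ne', log_rpow (by linarith)]; linarith
  exact (log_le_log_iff (by positivity) (Gamma_pos_of_pos (by linarith))).mp this

theorem Real.Gamma_mul_add_one_le_rpow_Gamma_add_one {x β : ℝ} (hx : -1 < x) (hβ : 0 < β)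
    (hβ1 : β < 1) : Gamma (β * x + 1) ≤ Gamma (x + 1) ^ β := by
  have h := Gamma_mul_add_mul_le_rpow_Gamma_mul_rpow_Gamma (s := x + 1) (t := 1) (by linarith)
    one_pos hβ (sub_pos.mpr hβ1) (add_sub_cancel β 1)
  rwa [Gamma_one, one_rpow, mul_one, mul_one, show β * (x + 1) + (1 - β) = β * x + 1 by ring] at h

theorem exists_pow_lt_factorial_rpow (A : ℝ) {ε : ℝ} (hε : 0 < ε) :
    ∃ n : ℕ, A ^ n < (n ! : ℝ) ^ ε := by
  obtain ⟨n, hn⟩ := ((FloorSemiring.tendsto_pow_div_factorial_atTop (|A| ^ ε⁻¹)).eventually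
    (gt_mem_nhds one_pos)).exists
  refine ⟨n, (le_abs_self _).trans_lt ?_⟩
  have hfac : (0 : ℝ) < n ! := by positivity
  rw [div_lt_one hfac, ← rpow_natCast, ← rpow_mul (abs_nonneg A), mul_comm,
    rpow_mul (abs_nonneg A), rpow_natCast] at hn
  calc |A ^ n| = ((|A| ^ n) ^ ε⁻¹) ^ ε := by
        rw [abs_pow, rpow_inv_rpow (by positivity) hε.ne']
    _ < (n ! : ℝ) ^ ε := rpow_lt_rpow (by positivity) hn hε

theorem Real.tendsto_Gamma_div_Gamma_add_atTop {a : ℝ} (ha : 0 < a) :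
    Tendsto (fun x => Gamma x / Gamma (x + a)) atTop (𝓝 0) := by
  have hbound : ∀ᶠ x in atTop, Gamma x / Gamma (x + a) ≤ ((x - 1) ^ a)⁻¹ := by
    filter_upwards [eventually_gt_atTop 1] with x hx
    have hpow : 0 < (x - 1) ^ a := rpow_pos_of_pos (by linarith) a
    rw [div_le_iff₀ (Gamma_pos_of_pos (by linarith)), inv_mul_eq_div, le_div_iff₀ hpow, mul_comm]
    exact rpow_sub_one_mul_Gamma_le_Gamma_add hx ha
  have hnonneg : ∀ᶠ x in atTop, 0 ≤ Gamma x / Gamma (x + a) := by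
    filter_upwards [eventually_gt_atTop 0] with x hx
    exact div_nonneg (Gamma_pos_of_pos hx).le (Gamma_pos_of_pos (by linarith)).le
  exact squeeze_zero' hnonneg hbound ((tendsto_rpow_atTop ha).comp
    (tendsto_atTop_add_const_right _ (-1) tendsto_id)).inv_tendsto_atTop

noncomputable def mittagLefflerSeries (β : ℝ) : FormalMultilinearSeries ℝ ℝ ℝ :=
  FormalMultilinearSeries.ofScalars ℝ fun n : ℕ => (Gamma (β * n + 1))⁻¹

theorem mittagLefflerSeries_radius {β : ℝ} (hβ : 0 < β) : (mittagLefflerSeries β).radius = ⊤ := by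
  refine FormalMultilinearSeries.ofScalars_radius_eq_top_of_tendsto _ _
    (Eventually.of_forall fun n => inv_ne_zero (Gamma_pos_of_pos (by positivity)).ne') ?_
  have hlin : Tendsto (fun n : ℕ => β * n + 1) atTop atTop :=
    tendsto_atTop_add_const_right _ 1 (tendsto_natCast_atTop_atTop.const_mul_atTop hβ)
  refine ((tendsto_Gamma_div_Gamma_add_atTop hβ).comp hlin).congr fun n => ?_
  have hnorm (k : ℕ) : ‖Gamma (β * k + 1)‖ = Gamma (β * k + 1) :=
    Real.norm_of_nonneg (Gamma_pos_of_pos (by positivity)).le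
  simp only [Function.comp, norm_inv, Nat.succ_eq_add_one, hnorm, inv_div_inv]
  push_cast
  ring_nf

theorem summable_pow_div_Gamma_mul_add_one {β : ℝ} (hβ : 0 < β) (x : ℝ) :
    Summable fun n : ℕ => x ^ n / Gamma (β * n + 1) := by
  have h := (mittagLefflerSeries β).summable_norm_apply (x := x)
    (by simp [mittagLefflerSeries_radius hβ])
  refine h.of_norm.congr fun n => ?_
  rw [mittagLefflerSeries, FormalMultilinearSeries.ofScalars_apply_eq, smul_eq_mul,
    inv_mul_eq_div]

theorem hasFPowerSeriesOnBall_mittagLefflerReal {β : ℝ} (hβ : 0 < β) :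
    HasFPowerSeriesOnBall (mittagLefflerReal β) (mittagLefflerSeries β) 0 ⊤ := by
  have h := (mittagLefflerSeries β).hasFPowerSeriesOnBall
    (by rw [mittagLefflerSeries_radius hβ]; exact ENNReal.zero_lt_top)
  rw [mittagLefflerSeries_radius hβ] at h
  convert h using 1
  funext x
  rw [mittagLefflerSeries, ← FormalMultilinearSeries.ofScalarsSum,
    FormalMultilinearSeries.ofScalars_sum_eq, mittagLefflerReal]
  simp only [smul_eq_mul, inv_mul_eq_div]

theorem analyticOnNhd_mittagLefflerReal {β : ℝ} (hβ : 0 < β) :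
    AnalyticOnNhd ℝ (mittagLefflerReal β) univ := by
  simpa [Metric.eball_top_eq_univ] using (hasFPowerSeriesOnBall_mittagLefflerReal hβ).analyticOnNhd

theorem mittagLefflerReal_zero (β : ℝ) : mittagLefflerReal β 0 = 1 := by
  rw [mittagLefflerReal, tsum_eq_single 0 fun n hn => by rw [zero_pow hn, zero_div]]
  simp

theorem pow_div_Gamma_le_mittagLefflerReal {β x : ℝ} (hβ : 0 < β) (hx : 0 ≤ x) (n : ℕ) :
    x ^ n / Gamma (β * n + 1) ≤ mittagLefflerReal β x :=
  (summable_pow_div_Gamma_mul_add_one hβ x).le_tsum n fun k _ =>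
    div_nonneg (pow_nonneg hx k) (Gamma_pos_of_pos (by positivity)).le

theorem factorial_rpow_le_mittagLefflerReal_natCast {β : ℝ} (hβ : 0 < β) (hβ1 : β < 1) (n : ℕ) :
    (n ! : ℝ) ^ (1 - β) ≤ mittagLefflerReal β n := by
  have hfac : (0 : ℝ) < n ! := by positivity
  have hΓ : Gamma (β * n + 1) ≤ (n ! : ℝ) ^ β := by
    rw [← Gamma_nat_eq_factorial]
    exact Gamma_mul_add_one_le_rpow_Gamma_add_one (by linarith [n.cast_nonneg (α := ℝ)]) hβ hβ1
  calc (n ! : ℝ) ^ (1 - β) = n ! / (n ! : ℝ) ^ β := by rw [rpow_sub hfac, rpow_one]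
    _ ≤ (n : ℝ) ^ n / Gamma (β * n + 1) :=
        div_le_div₀ (by positivity) (mod_cast n.factorial_le_pow)
          (Gamma_pos_of_pos (by positivity)) hΓ
    _ ≤ mittagLefflerReal β n := pow_div_Gamma_le_mittagLefflerReal hβ n.cast_nonneg n

theorem AnalyticOnNhd.map_add_eq_mul_of_nonneg {g : ℝ → ℝ} (hg : AnalyticOnNhd ℝ g univ)
    (h : ∀ x y, 0 ≤ x → 0 ≤ y → g (x + y) = g x * g y) (x y : ℝ) : g (x + y) = g x * g y := by
  have hshift (c : ℝ) : AnalyticOnNhd ℝ (fun t => g (t + c)) univ :=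
    hg.comp (analyticOnNhd_id.add analyticOnNhd_const) (mapsTo_univ _ _)
  have eq_of_eqOn_nonneg {F G : ℝ → ℝ} (hF : AnalyticOnNhd ℝ F univ) (hG : AnalyticOnNhd ℝ G univ)
      (hFG : ∀ t, 0 ≤ t → F t = G t) : F = G :=
    hF.eq_of_eventuallyEq hG (z₀ := 1) <|
      eventually_of_mem (Ioi_mem_nhds one_pos) fun t ht => hFG t (le_of_lt ht)
  have hfixed (y : ℝ) (hy : 0 ≤ y) : ∀ x, g (x + y) = g x * g y := congrFun <|
    eq_of_eqOn_nonneg (hshift y) (hg.mul analyticOnNhd_const) fun x hx => h x y hx hy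
  have hall : (fun y => g (x + y)) = fun y => g x * g y :=
    eq_of_eqOn_nonneg (by simpa only [add_comm x] using hshift x) (analyticOnNhd_const.mul hg)
      fun y hy => hfixed y hy x
  exact congrFun hall y

theorem mittagLefflerReal_add {β : ℝ} (hβ : 0 < β)
    (h : ∀ x y : ℝ, 0 ≤ x → 0 ≤ y →
      mittagLefflerReal β (-(x + y)) = mittagLefflerReal β (-x) * mittagLefflerReal β (-y))
    (u v : ℝ) : mittagLefflerReal β (u + v) = mittagLefflerReal β u * mittagLefflerReal β v := by
  have hneg : AnalyticOnNhd ℝ (fun t => mittagLefflerReal β (-t)) univ :=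
    (analyticOnNhd_mittagLefflerReal hβ).comp analyticOnNhd_id.neg (mapsTo_univ _ _)
  simpa [add_comm] using hneg.map_add_eq_mul_of_nonneg h (-u) (-v)

theorem map_natCast_eq_pow_of_map_add {R M : Type*} [AddMonoidWithOne R] [Monoid M] {g : R → M}
    (h0 : g 0 = 1) (hadd : ∀ x y, g (x + y) = g x * g y) (n : ℕ) : g n = g 1 ^ n := by
  induction n with
  | zero => rw [Nat.cast_zero, h0, pow_zero]
  | succ n ih => rw [Nat.cast_succ, hadd, ih, pow_succ]

/-- Let `0 < β ≤ 1`. If `E_β(-(x+y)) = E_β(-x) · E_β(-y)` for all reals `x, y ≥ 0`,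
then `β = 1` (i.e. `E_β` is the exponential function). -/
theorem mittagLeffler_multiplicative_iff_beta_eq_one (β : ℝ) (hβ : 0 < β) (hβ1 : β ≤ 1)
    (h : ∀ x y : ℝ, 0 ≤ x → 0 ≤ y →
      mittagLefflerReal β (-(x + y)) = mittagLefflerReal β (-x) * mittagLefflerReal β (-y)) :
    β = 1 := by
  by_contra hne
  have hβlt : β < 1 := lt_of_le_of_ne hβ1 hne
  obtain ⟨n, hn⟩ := exists_pow_lt_factorial_rpow (mittagLefflerReal β 1) (sub_pos.mpr hβlt)
  have hpow : mittagLefflerReal β n = mittagLefflerReal β 1 ^ n :=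
    map_natCast_eq_pow_of_map_add (mittagLefflerReal_zero β) (mittagLefflerReal_add hβ h) n
  exact hn.not_ge (hpow ▸ factorial_rpow_le_mittagLefflerReal_natCast hβ hβlt n)
end

section
/- Let 0 < β ≤ 1, d ≥ 1, a_1, …, a_d ≥ 0, and let X_1, …, X_d : Ω → ℝ be mutually independent random variables on a probability space (Ω, 𝓕, μ) such that for every k and every m ∈ ℕ₀ the power X_k^m is integrable with ∫_Ω X_k^{2m+1} dμ = 0 and ∫_Ω X_k^{2m} dμ = (2m)!/(2^m Γ(βm+1)) · a_k^m. Then for every n ∈ ℕ₀, ∫_Ω (X_1 + ⋯ + X_d)^{2n+1} dμ = 0 and ∫_Ω (X_1 + ⋯ + X_d)^{2n} dμ = ((2n)!/2^n) · ∑_{r} a_1^{r_1} ⋯ a_d^{r_d} / (Γ(βr_1+1) ⋯ Γ(βr_d+1)), where the sum runs over all tuples r = (r_1, …, r_d) ∈ ℕ₀^d with r_1 + ⋯ + r_d = n (with the convention a_k^0 = 1 even if a_k = 0). -/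
/-!
Expand `(∑ X_k)^m` by the multinomial theorem. Independence factors each mixed moment
`∫ ∏ X_k^{r_k}` into `∏ ∫ X_k^{r_k}`, so every term with some odd `r_k` vanishes: this kills all
odd moments, and for `m = 2n` only the tuples `r = 2s` with `∑ s_k = n` survive. In those terms the
multinomial coefficient `(2n)! / ∏ (2s_k)!` cancels the factorials of the even moments, leaving
`(2n)!/2^n · ∏ a_k^{s_k} / Γ(βs_k + 1)`.
-/

open MeasureTheory ProbabilityTheory Finset

section Independence

variable {Ω ι 𝕜 : Type*} [MeasurableSpace Ω] {μ : Measure Ω} [RCLike 𝕜]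

lemma ProbabilityTheory.iIndepFun.integrable_fun_finset_prod {Y : ι → Ω → 𝕜}
    (hY : iIndepFun Y μ) (hint : ∀ i, Integrable (Y i) μ) (s : Finset ι) :
    Integrable (fun ω ↦ ∏ i ∈ s, Y i ω) μ := by
  classical
  have := hY.isProbabilityMeasure
  induction s using Finset.induction_on with
  | empty => simp
  | insert i s hi ih =>
    have hindep : IndepFun (∏ j ∈ s, Y j) (Y i) μ :=
      hY.indepFun_finsetProd_of_notMem₀ (fun j ↦ (hint j).aemeasurable) hi
    rw [← Finset.prod_fn] at ih
    refine (hindep.integrable_mul ih (hint i)).congr (ae_of_all _ fun ω ↦ ?_)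
    simp [prod_insert hi, mul_comm]

lemma ProbabilityTheory.iIndepFun.integral_sum_pow [Fintype ι] [DecidableEq ι] {X : ι → Ω → 𝕜}
    (hX : iIndepFun X μ) (hint : ∀ i m, Integrable (fun ω ↦ X i ω ^ m) μ) (m : ℕ) :
    ∫ ω, (∑ i, X i ω) ^ m ∂μ
      = ∑ r ∈ piAntidiag univ m, (Nat.multinomial univ r : 𝕜) * ∏ i, ∫ ω, X i ω ^ r i ∂μ := by
  have hpow (r : ι → ℕ) : iIndepFun (fun i ω ↦ X i ω ^ r i) μ :=
    hX.comp (fun i x ↦ x ^ r i) (fun i ↦ by fun_prop)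
  simp_rw [sum_pow_eq_sum_piAntidiag]
  rw [integral_finsetSum _ fun r _ ↦
    ((hpow r).integrable_fun_finset_prod (fun i ↦ hint i (r i)) univ).const_mul _]
  refine sum_congr rfl fun r _ ↦ ?_
  rw [integral_const_mul,
    (hpow r).integral_fun_prod_eq_prod_integral fun i ↦ (hint i (r i)).aestronglyMeasurable]

end Independence

section Antidiagonal

variable {ι M : Type*} [DecidableEq ι] [AddCommMonoid M] {g : (ι → ℕ) → M}

lemma Finset.sum_piAntidiag_two_mul_add_one_eq_zero (s : Finset ι)
    (hg : ∀ r i, i ∈ s → Odd (r i) → g r = 0) (n : ℕ) :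
    ∑ r ∈ piAntidiag s (2 * n + 1), g r = 0 := by
  refine sum_eq_zero fun r hr ↦ ?_
  by_contra hne
  have hsum_even : Even (∑ i ∈ s, r i) :=
    even_sum _ fun i hi ↦ Nat.not_odd_iff_even.mp fun hodd ↦ hne (hg r i hi hodd)
  rw [(mem_piAntidiag.mp hr).1] at hsum_even
  exact Nat.not_even_two_mul_add_one n hsum_even

lemma Finset.sum_piAntidiag_two_mul (s : Finset ι)
    (hg : ∀ r i, i ∈ s → Odd (r i) → g r = 0) (n : ℕ) :
    ∑ r ∈ piAntidiag s (2 * n), g r = ∑ r ∈ piAntidiag s n, g (2 • r) := by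
  rw [← sum_filter_of_ne (p := fun r ↦ ∀ i ∈ s, 2 ∣ r i), ← map_nsmul_piAntidiag s n two_ne_zero,
    sum_map]
  · rfl
  · intro r _ hne i hi
    by_contra hodd
    exact hne (hg r i hi (Nat.odd_iff.mpr (Nat.two_dvd_ne_zero.mp hodd)))

end Antidiagonal

lemma Nat.multinomial_two_nsmul_mul_prod {ι K : Type*} [Fintype ι] [Field K]
    (s : ι → ℕ) (a g : ι → K) :
    (Nat.multinomial univ (2 • s) : K) *
        ∏ k, ((2 * s k).factorial / (2 ^ s k * g k) * a k ^ s k)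
      = (2 * ∑ k, s k).factorial / 2 ^ (∑ k, s k) * ((∏ k, a k ^ s k) / ∏ k, g k) := by
  have hspec : (∏ k, ((2 * s k).factorial : K)) * Nat.multinomial univ (2 • s)
      = (2 * ∑ k, s k).factorial := by
    have := Nat.multinomial_spec univ (2 • s)
    simp only [Pi.smul_apply, smul_eq_mul, ← mul_sum] at this
    rw [← Nat.cast_prod, ← Nat.cast_mul, this]
  simp only [prod_mul_distrib, prod_div_distrib, prod_pow_eq_pow_sum]
  rw [← hspec]
  ring

theorem moments_sum_of_indep_mittagLeffler_moments_general {Ω : Type*} [MeasurableSpace Ω]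
    (μ : Measure Ω) (β : ℝ)
    (d : ℕ) (a : Fin d → ℝ)
    (X : Fin d → Ω → ℝ)
    (hindep : iIndepFun X μ)
    (hint : ∀ k, ∀ m : ℕ, Integrable (fun ω => X k ω ^ m) μ)
    (hodd : ∀ k, ∀ m : ℕ, ∫ ω, X k ω ^ (2 * m + 1) ∂μ = 0)
    (heven : ∀ k, ∀ m : ℕ, ∫ ω, X k ω ^ (2 * m) ∂μ
      = (2 * m).factorial / (2 ^ m * Real.Gamma (β * m + 1)) * a k ^ m) :
    ∀ n : ℕ,
      (∫ ω, (∑ k, X k ω) ^ (2 * n + 1) ∂μ = 0) ∧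
      (∫ ω, (∑ k, X k ω) ^ (2 * n) ∂μ
        = (2 * n).factorial / 2 ^ n *
          ∑ r ∈ Finset.Nat.antidiagonalTuple d n,
            (∏ k, a k ^ r k) / ∏ k, Real.Gamma (β * r k + 1)) := by
  intro n
  have hmoment := iIndepFun.integral_sum_pow hindep hint
  have hvanish (r : Fin d → ℕ) (k : Fin d) (_ : k ∈ univ) (hk : Odd (r k)) :
      (Nat.multinomial univ r : ℝ) * ∏ k, ∫ ω, X k ω ^ r k ∂μ = 0 := by
    obtain ⟨m, hm⟩ := hk
    rw [prod_eq_zero (mem_univ k) (hm ▸ hodd k m), mul_zero]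
  refine ⟨by rw [hmoment, sum_piAntidiag_two_mul_add_one_eq_zero _ hvanish], ?_⟩
  rw [hmoment, sum_piAntidiag_two_mul _ hvanish,
    ← piAntidiag_univ_fin_eq_antidiagonalTuple, mul_sum]
  refine sum_congr rfl fun r hr ↦ ?_
  simp only [Pi.smul_apply, smul_eq_mul, heven]
  rw [Nat.multinomial_two_nsmul_mul_prod, (mem_piAntidiag.mp hr).1]

/-- Moments of a sum of independent random variables each having the moments of a
one-dimensional Mittag-Leffler random variable: the odd moments vanish, and the even
moments are given by a multinomial-type sum over tuples `r ∈ ℕ₀^d` with `∑ r_k = n`. -/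
theorem moments_sum_of_indep_mittagLeffler_moments {Ω : Type*} [MeasurableSpace Ω]
    (μ : Measure Ω) [IsProbabilityMeasure μ] (β : ℝ) (hβ : 0 < β) (hβ1 : β ≤ 1)
    (d : ℕ) (hd : 1 ≤ d) (a : Fin d → ℝ) (ha : ∀ k, 0 ≤ a k)
    (X : Fin d → Ω → ℝ) (hX : ∀ k, Measurable (X k))
    (hindep : iIndepFun X μ)
    (hint : ∀ k, ∀ m : ℕ, Integrable (fun ω => X k ω ^ m) μ)
    (hodd : ∀ k, ∀ m : ℕ, ∫ ω, X k ω ^ (2 * m + 1) ∂μ = 0)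
    (heven : ∀ k, ∀ m : ℕ, ∫ ω, X k ω ^ (2 * m) ∂μ
      = (2 * m).factorial / (2 ^ m * Real.Gamma (β * m + 1)) * a k ^ m) :
    ∀ n : ℕ,
      (∫ ω, (∑ k, X k ω) ^ (2 * n + 1) ∂μ = 0) ∧
      (∫ ω, (∑ k, X k ω) ^ (2 * n) ∂μ
        = (2 * n).factorial / 2 ^ n *
          ∑ r ∈ Finset.Nat.antidiagonalTuple d n,
            (∏ k, a k ^ r k) / ∏ k, Real.Gamma (β * r k + 1)) :=
  moments_sum_of_indep_mittagLeffler_moments_general μ β d a X hindep hint hodd heven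
end

section
/- Let 0 < β ≤ 1, d ≥ 1, a_1, …, a_d ≥ 0, and let X_1, …, X_d : Ω → ℝ be mutually independent random variables on a probability space (Ω, 𝓕, μ) such that for every k and every λ ∈ ℝ the function exp(|λ X_k|) is integrable and ∫_Ω e^{λ X_k} dμ = E_β(λ² a_k / 2). Then for every complex number z, the function ω ↦ exp(|z| · |X_1(ω) + ⋯ + X_d(ω)|) is integrable and ∫_Ω e^{z (X_1 + ⋯ + X_d)} dμ = ∏_{k=1}^d E_β(z² a_k / 2). In particular, taking z = i p with p ∈ ℝ, the characteristic function of X_1 + ⋯ + X_d at p equals ∏_{k=1}^d E_β(−p² a_k / 2). -/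
open MeasureTheory ProbabilityTheory

open Filter Topology

/-! By independence, the real moment generating function of `X₁ + ⋯ + X_d` is
`λ ↦ ∏ₖ E_β(λ² aₖ / 2)`. Both the complex moment generating function of the sum (finite for
every real exponent) and `z ↦ ∏ₖ E_β(z² aₖ / 2)` are entire, so by the identity theorem they
agree on all of `ℂ`. The series of `E_β` converges at every point needed because the
hypothesis identifies its sum with a positive moment generating function. -/

lemma mittagLeffler_ofReal (β x : ℝ) :
    mittagLeffler β 1 x = mittagLefflerReal β x := by
  rw [mittagLeffler, mittagLefflerReal, Complex.ofReal_tsum]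
  push_cast
  rfl

/-- A divergent `tsum` is `0`, so a nonzero value of `mittagLefflerReal` certifies convergence. -/
lemma summable_of_mittagLefflerReal_ne_zero {β x : ℝ} (h : mittagLefflerReal β x ≠ 0) :
    Summable fun n : ℕ => x ^ n / Real.Gamma (β * n + 1) := by
  by_contra hdiv
  exact h (tsum_eq_zero_of_not_summable hdiv)

lemma differentiable_mittagLeffler_sq_mul_div_two {β ρ a : ℝ}
    (hsum : ∀ r : ℝ, Summable fun n : ℕ => (r ^ 2 * a / 2) ^ n / Real.Gamma (β * n + ρ)) :
    Differentiable ℂ fun z : ℂ => mittagLeffler β ρ (z ^ 2 * a / 2) := by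
  intro z
  set r := ‖z‖ + 1
  have hz : Metric.ball (0 : ℂ) r ∈ 𝓝 z := Metric.isOpen_ball.mem_nhds (by simp [r])
  refine (Complex.differentiableOn_tsum_of_summable_norm (hsum r).abs (fun n => ?_)
    Metric.isOpen_ball fun n w hw => ?_).differentiableAt hz
  · fun_prop
  · have hw : ‖w‖ ≤ r := (mem_ball_zero_iff.mp hw).le
    rw [norm_div, norm_pow, abs_div, abs_pow, Complex.norm_real, Real.norm_eq_abs]
    gcongr
    rw [norm_div, norm_mul, norm_pow, Complex.norm_real, Real.norm_eq_abs, abs_div, abs_mul,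
      abs_pow, abs_of_nonneg (by positivity : 0 ≤ r), Complex.norm_ofNat, abs_two]
    gcongr

lemma Differentiable.eq_of_forall_ofReal {E : Type*} [NormedAddCommGroup E] [NormedSpace ℂ E]
    [CompleteSpace E] {f g : ℂ → E} (hf : Differentiable ℂ f) (hg : Differentiable ℂ g)
    (hfg : ∀ x : ℝ, f x = g x) : f = g := by
  refine AnalyticOnNhd.eq_of_frequently_eq (z₀ := 0)
    (Complex.analyticOnNhd_univ_iff_differentiable.mpr hf)
    (Complex.analyticOnNhd_univ_iff_differentiable.mpr hg) ?_
  have hreal : Tendsto ((↑) : ℝ → ℂ) (𝓝[≠] 0) (𝓝[≠] 0) :=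
    Complex.continuous_ofReal.continuousWithinAt.tendsto_nhdsWithin fun _ _ ↦ by simp_all
  exact hreal.frequently (Frequently.of_forall hfg)

lemma differentiable_complexMGF {Ω : Type*} [MeasurableSpace Ω] {X : Ω → ℝ} {μ : Measure Ω}
    (h : ∀ t : ℝ, Integrable (fun ω => Real.exp (t * X ω)) μ) :
    Differentiable ℂ (complexMGF X μ) := by
  have huniv : integrableExpSet X μ = Set.univ := Set.eq_univ_of_forall h
  simpa [huniv, differentiableOn_univ] using differentiableOn_complexMGF (X := X) (μ := μ)

lemma complexMGF_eq_of_forall_mgf_eq {Ω : Type*} [MeasurableSpace Ω] {X : Ω → ℝ}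
    {μ : Measure Ω} {g : ℂ → ℂ} (h : ∀ t : ℝ, Integrable (fun ω => Real.exp (t * X ω)) μ)
    (hg : Differentiable ℂ g) (hmgf : ∀ x : ℝ, mgf X μ x = g x) : complexMGF X μ = g :=
  (differentiable_complexMGF h).eq_of_forall_ofReal hg fun x => by rw [complexMGF_ofReal, hmgf]

theorem complex_mgf_sum_of_indep_mittagLeffler_general {Ω : Type*} [MeasurableSpace Ω]
    (μ : Measure Ω) [IsProbabilityMeasure μ] (β : ℝ)
    (d : ℕ) (a : Fin d → ℝ)
    (X : Fin d → Ω → ℝ) (hX : ∀ k, Measurable (X k))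
    (hindep : iIndepFun X μ)
    (hint : ∀ k, ∀ l : ℝ, Integrable (fun ω => Real.exp |l * X k ω|) μ)
    (hmgf : ∀ k, ∀ l : ℝ, ∫ ω, Real.exp (l * X k ω) ∂μ
      = mittagLefflerReal β (l ^ 2 * a k / 2)) :
    (∀ z : ℂ,
      Integrable (fun ω => Real.exp (‖z‖ * |∑ k, X k ω|)) μ ∧
      ∫ ω, Complex.exp (z * ((∑ k, X k ω : ℝ) : ℂ)) ∂μ
        = ∏ k, mittagLeffler β 1 (z ^ 2 * (a k : ℂ) / 2)) ∧
    (∀ p : ℝ,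
      ∫ ω, Complex.exp (Complex.I * (p : ℂ) * ((∑ k, X k ω : ℝ) : ℂ)) ∂μ
        = ∏ k, mittagLeffler β 1 (-((p : ℂ) ^ 2 * (a k : ℂ) / 2))) := by
  set S : Ω → ℝ := fun ω => ∑ k, X k ω
  have hXint (k : Fin d) (l : ℝ) : Integrable (fun ω => Real.exp (l * X k ω)) μ :=
    (hint k l).mono' ((hX k).const_mul l).exp.aestronglyMeasurable
      (.of_forall fun ω => by simpa using le_abs_self (l * X k ω))
  have hSint (l : ℝ) : Integrable (fun ω => Real.exp (l * S ω)) μ := by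
    simpa [Finset.sum_fn] using hindep.integrable_exp_mul_sum hX fun k _ => hXint k l
  have hsum (k : Fin d) (r : ℝ) :
      Summable fun n : ℕ => (r ^ 2 * a k / 2) ^ n / Real.Gamma (β * n + 1) :=
    summable_of_mittagLefflerReal_ne_zero ((hmgf k r).symm ▸ (mgf_pos (hXint k r)).ne')
  have hMG : complexMGF S μ = fun z => ∏ k, mittagLeffler β 1 (z ^ 2 * (a k : ℂ) / 2) := by
    refine complexMGF_eq_of_forall_mgf_eq hSint
      (.fun_finsetProd fun k _ => differentiable_mittagLeffler_sq_mul_div_two (hsum k)) fun x => ?_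
    have hmgfS : mgf S μ x = ∏ k, mgf (X k) μ x := by
      simpa [Finset.sum_fn] using hindep.mgf_sum hX Finset.univ (t := x)
    rw [hmgfS, Complex.ofReal_prod]
    refine Finset.prod_congr rfl fun k _ => ?_
    rw [mgf, hmgf, ← mittagLeffler_ofReal]
    push_cast
    rfl
  refine ⟨fun z => ⟨integrable_exp_mul_abs (hSint ‖z‖) (hSint (-‖z‖)), congr_fun hMG z⟩,
    fun p => ?_⟩
  have hchar := congr_fun hMG (Complex.I * p)
  simp only [mul_pow, Complex.I_sq, neg_mul, one_mul, neg_div] at hchar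
  exact hchar

/-- For independent random variables `X_k` with moment generating functions
`λ ↦ E_β(λ² a_k / 2)`, for every complex `z` the function `e^{|z|·|X_1+⋯+X_d|}` is
integrable, `∫ e^{z(X_1+⋯+X_d)} dμ = ∏_k E_β(z² a_k / 2)`, and in particular the
characteristic function of the sum at `p ∈ ℝ` equals `∏_k E_β(-p² a_k / 2)`. -/
theorem complex_mgf_sum_of_indep_mittagLeffler {Ω : Type*} [MeasurableSpace Ω]
    (μ : Measure Ω) [IsProbabilityMeasure μ] (β : ℝ) (hβ : 0 < β) (hβ1 : β ≤ 1)
    (d : ℕ) (hd : 1 ≤ d) (a : Fin d → ℝ) (ha : ∀ k, 0 ≤ a k)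
    (X : Fin d → Ω → ℝ) (hX : ∀ k, Measurable (X k))
    (hindep : iIndepFun X μ)
    (hint : ∀ k, ∀ l : ℝ, Integrable (fun ω => Real.exp |l * X k ω|) μ)
    (hmgf : ∀ k, ∀ l : ℝ, ∫ ω, Real.exp (l * X k ω) ∂μ
      = mittagLefflerReal β (l ^ 2 * a k / 2)) :
    (∀ z : ℂ,
      Integrable (fun ω => Real.exp (‖z‖ * |∑ k, X k ω|)) μ ∧
      ∫ ω, Complex.exp (z * ((∑ k, X k ω : ℝ) : ℂ)) ∂μ
        = ∏ k, mittagLeffler β 1 (z ^ 2 * (a k : ℂ) / 2)) ∧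
    (∀ p : ℝ,
      ∫ ω, Complex.exp (Complex.I * (p : ℂ) * ((∑ k, X k ω : ℝ) : ℂ)) ∂μ
        = ∏ k, mittagLeffler β 1 (-((p : ℂ) ^ 2 * (a k : ℂ) / 2))) :=
  complex_mgf_sum_of_indep_mittagLeffler_general μ β d a X hX hindep hint hmgf
end

section
/- Let 0 < β ≤ 1, 0 < α < 2, d ≥ 1, and let R_α(t,s) := (t^α + s^α − |t−s|^α)/2 for t, s ≥ 0. Let (X_t)_{t ≥ 0} be a family of random vectors X_t = (X_{t,1}, …, X_{t,d}) : Ω → ℝ^d on a probability space (Ω, 𝓕, μ) such that for every n ≥ 1, all times t_1, …, t_n ≥ 0, and every matrix p = (p_{k,r}) ∈ ℝ^{d×n}, ∫_Ω exp(i ∑_{r=1}^n ∑_{k=1}^d p_{k,r} X_{t_r,k}(ω)) dμ(ω) = ∏_{k=1}^d E_β(−(1/2) ∑_{r=1}^n ∑_{q=1}^n p_{k,r} p_{k,q} R_α(t_r, t_q)). Then the process is self-similar with index α/2: for every a > 0, every n ≥ 1 and all t_1, …, t_n ≥ 0, the pushforward law under μ of the map ω ↦ (X_{a t_1}(ω),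 …, X_{a t_n}(ω)) ∈ (ℝ^d)^n equals the pushforward law of the map ω ↦ (a^{α/2} X_{t_1}(ω), …, a^{α/2} X_{t_n}(ω)). -/
/-!
Dilating all times by `a` multiplies the kernel `R_α` by `a ^ α` (it is homogeneous of degree
`α`), which in the hypothesis on characteristic functions is the same as multiplying every
coefficient `p k r` by `a ^ (α / 2)`. Hence the two finite-dimensional laws have the same
characteristic function, and a finite measure on a finite-dimensional space is determined by its
characteristic function.
-/

open MeasureTheory

/-- The ggBm covariance kernel `R_α(t,s) = (t^α + s^α - |t-s|^α)/2`. -/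
noncomputable def ggBmCov (α t s : ℝ) : ℝ := (t ^ α + s ^ α - |t - s| ^ α) / 2

open Complex

theorem ggBmCov_mul_mul (α : ℝ) {a t s : ℝ} (ha : 0 ≤ a) (ht : 0 ≤ t) (hs : 0 ≤ s) :
    ggBmCov α (a * t) (a * s) = a ^ α * ggBmCov α t s := by
  rw [ggBmCov, ggBmCov, ← mul_sub, abs_mul, abs_of_nonneg ha, Real.mul_rpow ha ht,
    Real.mul_rpow ha hs, Real.mul_rpow ha (abs_nonneg _)]
  ring

theorem LinearMap.apply_eq_sum_sum_single {ι κ : Type*} [Fintype ι] [Fintype κ]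
    [DecidableEq ι] [DecidableEq κ] (L : (ι → κ → ℝ) →ₗ[ℝ] ℝ) (x : ι → κ → ℝ) :
    L x = ∑ i, ∑ j, L (Pi.single i (Pi.single j 1)) * x i j := by
  have hx : x = ∑ i, ∑ j, x i j • Pi.single i (Pi.single j (1 : ℝ)) := by
    ext i' j'
    simp [Finset.sum_apply, Pi.single_apply, apply_ite (fun f : κ → ℝ => f j')]
  conv_lhs => rw [hx]
  simp only [map_sum, map_smul, smul_eq_mul, mul_comm]

theorem charFunDual_map_pi_pi {Ω ι κ : Type*} [MeasurableSpace Ω] [Fintype ι] [Fintype κ]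
    [DecidableEq ι] [DecidableEq κ] {μ : Measure Ω} {Y : ι → Ω → κ → ℝ}
    (hY : ∀ i, Measurable (Y i)) (L : StrongDual ℝ (ι → κ → ℝ)) :
    charFunDual (μ.map fun ω i => Y i ω) L
      = ∫ ω, cexp (I * ((∑ i, ∑ j, L (Pi.single i (Pi.single j 1)) * Y i ω j : ℝ) : ℂ)) ∂μ := by
  rw [charFunDual_apply, integral_map (measurable_pi_lambda _ hY).aemeasurable (by fun_prop)]
  simp_rw [mul_comm _ I]
  congr! 4 with ω
  exact_mod_cast L.toLinearMap.apply_eq_sum_sum_single _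

def HasVggBmCharFun {Ω : Type*} [MeasurableSpace Ω] (μ : Measure Ω) (β α : ℝ) {d : ℕ}
    (X : ℝ → Ω → Fin d → ℝ) : Prop :=
  ∀ n : ℕ, 1 ≤ n → ∀ t : Fin n → ℝ, (∀ r, 0 ≤ t r) → ∀ p : Fin d → Fin n → ℝ,
    ∫ ω, cexp (I * ((∑ r, ∑ k, p k r * X (t r) ω k : ℝ) : ℂ)) ∂μ
      = ∏ k, mittagLeffler β 1
          (-(1 / 2 : ℂ) * ((∑ r, ∑ q, p k r * p k q * ggBmCov α (t r) (t q) : ℝ) : ℂ))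

theorem HasVggBmCharFun.integral_cexp_dilate_time {Ω : Type*} [MeasurableSpace Ω]
    {μ : Measure Ω} {β α : ℝ} {d : ℕ} {X : ℝ → Ω → Fin d → ℝ} (hX : HasVggBmCharFun μ β α X)
    {a : ℝ} (ha : 0 < a) {n : ℕ} (hn : 1 ≤ n) {t : Fin n → ℝ} (ht : ∀ r, 0 ≤ t r)
    (p : Fin d → Fin n → ℝ) :
    ∫ ω, cexp (I * ((∑ r, ∑ k, p k r * X (a * t r) ω k : ℝ) : ℂ)) ∂μ
      = ∫ ω, cexp (I * ((∑ r, ∑ k, p k r * (a ^ (α / 2) * X (t r) ω k) : ℝ) : ℂ)) ∂μ := by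
  have hsq : a ^ (α / 2) * a ^ (α / 2) = a ^ α := by
    rw [← Real.rpow_add ha, add_halves]
  calc _ = ∏ k, mittagLeffler β 1 (-(1 / 2 : ℂ) * ((∑ r, ∑ q,
        (a ^ (α / 2) * p k r) * (a ^ (α / 2) * p k q) * ggBmCov α (t r) (t q) : ℝ) : ℂ)) := by
        rw [hX n hn _ fun r => mul_nonneg ha.le (ht r)]
        refine Finset.prod_congr rfl fun k _ => ?_
        congr 3
        refine Finset.sum_congr rfl fun r _ => Finset.sum_congr rfl fun q _ => ?_
        rw [ggBmCov_mul_mul α ha.le (ht r) (ht q), ← hsq]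
        ring
    _ = _ := by
        rw [← hX n hn t ht]
        congr! 5 with ω
        refine Finset.sum_congr rfl fun r _ => Finset.sum_congr rfl fun k _ => ?_
        ring

theorem vggBm_self_similar_general {Ω : Type*} [MeasurableSpace Ω]
    (μ : Measure Ω) [IsProbabilityMeasure μ] (β α : ℝ) (d : ℕ)
    (X : ℝ → Ω → Fin d → ℝ) (hX : ∀ t : ℝ, Measurable (X t))
    (hchar : ∀ n : ℕ, 1 ≤ n → ∀ t : Fin n → ℝ, (∀ r, 0 ≤ t r) →
      ∀ p : Fin d → Fin n → ℝ,
      ∫ ω, Complex.exp (Complex.I * ((∑ r, ∑ k, p k r * X (t r) ω k : ℝ) : ℂ)) ∂μ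
        = ∏ k, mittagLeffler β 1
            (-(1 / 2 : ℂ) * ((∑ r, ∑ q, p k r * p k q * ggBmCov α (t r) (t q) : ℝ) : ℂ))) :
    ∀ a : ℝ, 0 < a → ∀ n : ℕ, 1 ≤ n → ∀ t : Fin n → ℝ, (∀ r, 0 ≤ t r) →
      Measure.map (fun ω => fun r : Fin n => X (a * t r) ω) μ
        = Measure.map (fun ω => fun (r : Fin n) (k : Fin d) => a ^ (α / 2) * X (t r) ω k) μ := by
  intro a ha n hn t ht
  have hvgg : HasVggBmCharFun μ β α X := hchar
  refine Measure.ext_of_charFunDual (funext fun L => ?_)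
  rw [charFunDual_map_pi_pi fun _ => hX _, charFunDual_map_pi_pi fun _ => by fun_prop]
  exact hvgg.integral_cexp_dilate_time ha hn ht _

/-- A `d`-dimensional process whose finite-dimensional characteristic functions are those
of a vector-valued generalized grey Brownian motion is self-similar with index `α/2`. -/
theorem vggBm_self_similar {Ω : Type*} [MeasurableSpace Ω]
    (μ : Measure Ω) [IsProbabilityMeasure μ] (β α : ℝ) (hβ : 0 < β) (hβ1 : β ≤ 1)
    (hα : 0 < α) (hα2 : α < 2) (d : ℕ) (hd : 1 ≤ d)
    (X : ℝ → Ω → Fin d → ℝ) (hX : ∀ t : ℝ, Measurable (X t))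
    (hchar : ∀ n : ℕ, 1 ≤ n → ∀ t : Fin n → ℝ, (∀ r, 0 ≤ t r) →
      ∀ p : Fin d → Fin n → ℝ,
      ∫ ω, Complex.exp (Complex.I * ((∑ r, ∑ k, p k r * X (t r) ω k : ℝ) : ℂ)) ∂μ
        = ∏ k, mittagLeffler β 1
            (-(1 / 2 : ℂ) * ((∑ r, ∑ q, p k r * p k q * ggBmCov α (t r) (t q) : ℝ) : ℂ))) :
    ∀ a : ℝ, 0 < a → ∀ n : ℕ, 1 ≤ n → ∀ t : Fin n → ℝ, (∀ r, 0 ≤ t r) →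
      Measure.map (fun ω => fun r : Fin n => X (a * t r) ω) μ
        = Measure.map (fun ω => fun (r : Fin n) (k : Fin d) => a ^ (α / 2) * X (t r) ω k) μ :=
  vggBm_self_similar_general μ β α d X hX hchar
end
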